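/- arXiv:2112.13045 — 2 statements merged into one kernel-verified Lean document; each statement's English description precedes it below -/
import Mathlib

section
/- Let n, r ≥ 1 and let a, b, a', b' : Fin n → Fin r be functions. Then Σ_{w ∈ Fin n} x_{a(w)}·x_{b(w)} = Σ_{w ∈ Fin n} x_{a'(w)}·x_{b'(w)} in the free noncommutative algebra over ℤ on generators x₁,…,x_r if and only if Σ_{w ∈ Fin n} y_{a(w)}·z_{b(w)} = Σ_{w ∈ Fin n} y_{a'(w)}·z_{b'(w)} in the commutative polynomial ring ℤ[y₁,…,y_r, z₁,…,z_r]. -/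
/-!
Both sums are sums of members of a linearly independent family indexed by the pairs
`(a w, b w)`: the words `xᵢ xⱼ` of length two in the free algebra, and the monomials `yᵢ zⱼ`
in the polynomial ring. Over a ring of characteristic zero, two such sums agree exactly when
they run over the same multiset of indices, so both equalities say that `w ↦ (a w, b w)` and
`w ↦ (a' w, b' w)` take every value equally often.
-/

open Finset

theorem Finsupp.sum_single_one_apply {ι κ R : Type*} [DecidableEq κ] [AddCommMonoidWithOne R]
    (s : Finset ι) (g : ι → κ) (p : κ) :
    (∑ i ∈ s, Finsupp.single (g i) (1 : R)) p = ((s.val.map g).count p : R) := by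
  simp only [Finsupp.finsetSum_apply, Finsupp.single_apply, eq_comm, sum_boole,
    Multiset.count_map]
  rfl

theorem LinearIndependent.sum_comp_eq_sum_comp_iff {ι κ R M : Type*} [Fintype ι] [Semiring R]
    [CharZero R] [AddCommMonoid M] [Module R M] {v : κ → M} (hv : LinearIndependent R v)
    (g g' : ι → κ) :
    ∑ i, v (g i) = ∑ i, v (g' i) ↔ univ.val.map g = univ.val.map g' := by
  classical
  have expand (g : ι → κ) :
      ∑ i, v (g i) = Finsupp.linearCombination R v (∑ i, Finsupp.single (g i) 1) := by
    simp [map_sum]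
  rw [expand, expand, hv.eq_iff, Finsupp.ext_iff, Multiset.ext]
  simp only [Finsupp.sum_single_one_apply, Nat.cast_inj]

theorem FreeAlgebra.linearIndependent_ι_mul_ι (R X : Type*) [CommSemiring R] :
    LinearIndependent R (fun p : X × X => FreeAlgebra.ι R p.1 * FreeAlgebra.ι R p.2) := by
  have hw : Function.Injective (fun p : X × X => FreeMonoid.of p.1 * FreeMonoid.of p.2) := by
    rintro ⟨i, j⟩ ⟨k, l⟩ h
    simpa using congrArg FreeMonoid.toList h
  convert (FreeAlgebra.basisFreeMonoid R X).linearIndependent.comp _ hw with p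
  simp [FreeAlgebra.basisFreeMonoid, FreeAlgebra.equivMonoidAlgebraFreeMonoid]

theorem MvPolynomial.linearIndependent_X_inl_mul_X_inr (R σ τ : Type*) [CommSemiring R] :
    LinearIndependent R (fun p : σ × τ =>
      (MvPolynomial.X (Sum.inl p.1) * MvPolynomial.X (Sum.inr p.2) : MvPolynomial (σ ⊕ τ) R)) := by
  have he : Function.Injective (fun p : σ × τ =>
      Finsupp.single (Sum.inl p.1 : σ ⊕ τ) 1 + Finsupp.single (Sum.inr p.2) 1) := by
    rintro ⟨i, j⟩ ⟨k, l⟩ h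
    simpa [Finsupp.single_add_single_eq_single_add_single] using h
  convert (MvPolynomial.basisMonomials (σ ⊕ τ) R).linearIndependent.comp _ he with p
  simp [MvPolynomial.X, MvPolynomial.monomial_mul]

theorem free_vs_commutative_sum_prod_general (n r : ℕ)
    (a b a' b' : Fin n → Fin r) :
    (∑ w : Fin n, FreeAlgebra.ι ℤ (a w) * FreeAlgebra.ι ℤ (b w)
        = ∑ w : Fin n, FreeAlgebra.ι ℤ (a' w) * FreeAlgebra.ι ℤ (b' w))
      ↔ (∑ w : Fin n, (MvPolynomial.X (Sum.inl (a w)) * MvPolynomial.X (Sum.inr (b w)) :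
            MvPolynomial (Fin r ⊕ Fin r) ℤ)
          = ∑ w : Fin n, MvPolynomial.X (Sum.inl (a' w)) * MvPolynomial.X (Sum.inr (b' w))) :=
  ((FreeAlgebra.linearIndependent_ι_mul_ι ℤ (Fin r)).sum_comp_eq_sum_comp_iff
      (fun w => (a w, b w)) (fun w => (a' w, b' w))).trans
    ((MvPolynomial.linearIndependent_X_inl_mul_X_inr ℤ (Fin r) (Fin r)).sum_comp_eq_sum_comp_iff
      _ _).symm

/-- Replacing the noncommutative variables `x_i` in the Weisfeiler–Leman matrix product by
disjoint "left" and "right" commuting variables `y_i`, `z_j` does not change which entries are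
equal: `Σ_w x_{a w} * x_{b w} = Σ_w x_{a' w} * x_{b' w}` in the free algebra `ℤ⟨x₁,…,x_r⟩`
iff `Σ_w y_{a w} * z_{b w} = Σ_w y_{a' w} * z_{b' w}` in `ℤ[y₁,…,y_r, z₁,…,z_r]`. -/
theorem free_vs_commutative_sum_prod (n r : ℕ) (hn : 1 ≤ n) (hr : 1 ≤ r)
    (a b a' b' : Fin n → Fin r) :
    (∑ w : Fin n, FreeAlgebra.ι ℤ (a w) * FreeAlgebra.ι ℤ (b w)
        = ∑ w : Fin n, FreeAlgebra.ι ℤ (a' w) * FreeAlgebra.ι ℤ (b' w))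
      ↔ (∑ w : Fin n, (MvPolynomial.X (Sum.inl (a w)) * MvPolynomial.X (Sum.inr (b w)) :
            MvPolynomial (Fin r ⊕ Fin r) ℤ)
          = ∑ w : Fin n, MvPolynomial.X (Sum.inl (a' w)) * MvPolynomial.X (Sum.inr (b' w))) :=
  free_vs_commutative_sum_prod_general n r a b a' b'
end

section
/- Let n, r, m ≥ 1 be integers and let c : Fin n × Fin n → Fin r be a coloring. Suppose (u,v) and (u',v') are two pairs such that the multiset over w ∈ Fin n of pairs (c(u,w), c(w,v)) differs from the multiset over w of pairs (c(u',w), c(w,v')). Then the number of pairs of functions (χ, ψ), where χ, ψ : Fin r → {1,…,m} ⊆ ℤ, satisfying Σ_{w ∈ Fin n} χ(c(u,w))·ψ(c(w,v)) = Σ_{w ∈ Fin n} χ(c(u',w))·ψ(c(w,v')) is at most 2·m^{2r−1}. Equivalently, if χ and ψ are chosen independently and uniformly at random among all functions Fin r → {1,…,m}, the probability that these two sums coincide is at most 2/m. -/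
/-!
Writing `N_{uv}(i, j)` for the number of `w` with `(c(u,w), c(w,v)) = (i, j)`, the equation is
`∑ i j, a i j · χ i · ψ j = 0` with `a = N_{uv} - N_{u'v'}`, which is nonzero exactly because the
two multisets differ. So the good pairs `(χ, ψ)` are the zeros in `{1,…,m}^(2r)` of a nonzero
polynomial of total degree at most `2`, and the Schwartz–Zippel lemma bounds their number by
`2 · m^(2r) / m`.
-/

open Finset

namespace MvPolynomial

section SchwartzZippel

variable {R σ : Type*} [CommRing R] [IsDomain R] [DecidableEq R] [Fintype σ] [DecidableEq σ]

theorem card_filter_eval_eq_zero_mul_le {p : MvPolynomial σ R} (hp : p ≠ 0) (S : Finset R) :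
    #{x ∈ Fintype.piFinset fun _ : σ ↦ S | eval x p = 0} * #S
      ≤ p.totalDegree * #S ^ Fintype.card σ := by
  set e := Fintype.equivFin σ
  have hq : rename e p ≠ 0 := (map_ne_zero_iff _ (rename_injective _ e.injective)).2 hp
  have hcard : #{x ∈ Fintype.piFinset fun _ ↦ S | eval x (rename e p) = 0}
      = #{x ∈ Fintype.piFinset fun _ : σ ↦ S | eval x p = 0} :=
    (card_equiv (e.arrowCongr (Equiv.refl R)) fun x ↦ by
      simp [eval_rename, Function.comp_def, e.symm.forall_congr_right (q := (x · ∈ S))]).symm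
  have hdeg : (rename e p).totalDegree = p.totalDegree := totalDegree_renameEquiv e p
  have hsz := schwartz_zippel_totalDegree hq S
  rw [hcard, hdeg] at hsz
  rcases S.eq_empty_or_nonempty with rfl | hS
  · simp
  rw [div_le_div_iff₀ (by positivity) (by simpa using hS)] at hsz
  exact_mod_cast hsz

end SchwartzZippel

section Bilinear

variable {R ι κ : Type*} [CommRing R] [Fintype ι] [Fintype κ]

noncomputable def bilinear (a : ι → κ → R) : MvPolynomial (ι ⊕ κ) R :=
  ∑ i, ∑ j, C (a i j) * (X (Sum.inl i) * X (Sum.inr j))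

theorem eval_sumElim_bilinear (a : ι → κ → R) (χ : ι → R) (ψ : κ → R) :
    eval (Sum.elim χ ψ) (bilinear a) = ∑ i, ∑ j, a i j * (χ i * ψ j) := by
  simp [bilinear]

theorem totalDegree_bilinear_le [Nontrivial R] (a : ι → κ → R) :
    (bilinear a).totalDegree ≤ 2 := by
  refine totalDegree_finsetSum_le fun i _ ↦ totalDegree_finsetSum_le fun j _ ↦ ?_
  calc (C (a i j) * (X (Sum.inl i) * X (Sum.inr j))).totalDegree
      ≤ (X (R := R) (Sum.inl i : ι ⊕ κ) * X (Sum.inr j)).totalDegree :=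
        (totalDegree_mul _ _).trans (by rw [totalDegree_C, zero_add])
    _ ≤ 1 + 1 :=
        (totalDegree_mul _ _).trans (add_le_add (totalDegree_X _).le (totalDegree_X _).le)

theorem bilinear_ne_zero [Nontrivial R] [DecidableEq ι] [DecidableEq κ] {a : ι → κ → R}
    (ha : a ≠ 0) : bilinear a ≠ 0 := by
  obtain ⟨i₀, hi₀⟩ := Function.ne_iff.1 ha
  obtain ⟨j₀, hij₀⟩ := Function.ne_iff.1 hi₀
  intro h
  have heval := eval_sumElim_bilinear a (Pi.single i₀ 1) (Pi.single j₀ 1)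
  simp [h, Pi.single_apply] at heval
  exact hij₀ heval.symm

end Bilinear

end MvPolynomial

theorem card_filter_bilinear_eq_zero_mul_le {R ι κ : Type*} [CommRing R] [IsDomain R]
    [DecidableEq R] [Fintype ι] [Fintype κ] [DecidableEq ι] [DecidableEq κ] {a : ι → κ → R}
    (ha : a ≠ 0) (S : Finset R) :
    #{χψ ∈ (Fintype.piFinset fun _ : ι ↦ S) ×ˢ (Fintype.piFinset fun _ : κ ↦ S) |
        ∑ i, ∑ j, a i j * (χψ.1 i * χψ.2 j) = 0} * #S
      ≤ 2 * #S ^ (Fintype.card ι + Fintype.card κ) := by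
  have hcard : #{χψ ∈ (Fintype.piFinset fun _ : ι ↦ S) ×ˢ (Fintype.piFinset fun _ : κ ↦ S) |
        ∑ i, ∑ j, a i j * (χψ.1 i * χψ.2 j) = 0}
      = #{x ∈ Fintype.piFinset fun _ : ι ⊕ κ ↦ S |
          MvPolynomial.eval x (MvPolynomial.bilinear a) = 0} :=
    card_equiv (Equiv.sumArrowEquivProdArrow ι κ R).symm fun _ ↦ by
      simp [Equiv.sumArrowEquivProdArrow, MvPolynomial.eval_sumElim_bilinear]
  rw [hcard, ← Fintype.card_sum]
  exact (MvPolynomial.card_filter_eval_eq_zero_mul_le (MvPolynomial.bilinear_ne_zero ha) S).trans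
    (Nat.mul_le_mul_right _ (MvPolynomial.totalDegree_bilinear_le a))

theorem Multiset.sum_map_eq_sum_count {β A : Type*} [Fintype β] [DecidableEq β]
    [AddCommMonoid A] (M : Multiset β) (g : β → A) :
    (M.map g).sum = ∑ b, M.count b • g b := by
  rw [Finset.sum_multiset_map_count]
  exact sum_subset (subset_univ _) fun b _ hb ↦ by
    rw [Multiset.count_eq_zero.2 (by simpa using hb), zero_smul]

theorem sum_mul_eq_sum_count_mul {R α ι κ : Type*} [CommSemiring R] [Fintype α] [Fintype ι]
    [Fintype κ] [DecidableEq ι] [DecidableEq κ] (f : α → ι × κ) (χ : ι → R) (ψ : κ → R) :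
    ∑ w, χ (f w).1 * ψ (f w).2
      = ∑ i, ∑ j, ((univ.val.map f).count (i, j) : R) * (χ i * ψ j) :=
  calc ∑ w, χ (f w).1 * ψ (f w).2 = ((univ.val.map f).map fun p ↦ χ p.1 * ψ p.2).sum := by
        rw [Multiset.map_map]; rfl
    _ = _ := by simp only [Multiset.sum_map_eq_sum_count, Fintype.sum_prod_type, nsmul_eq_mul]

theorem probabilistic_detection_general (n r m : ℕ) (hr : 1 ≤ r) (hm : 1 ≤ m)
    (c : Fin n × Fin n → Fin r) (u v u' v' : Fin n)
    (hdiff : (Finset.univ.val.map fun w : Fin n => (c (u, w), c (w, v)))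
      ≠ Finset.univ.val.map fun w : Fin n => (c (u', w), c (w, v'))) :
    (((Fintype.piFinset fun _ : Fin r => Finset.Icc (1 : ℤ) m) ×ˢ
        (Fintype.piFinset fun _ : Fin r => Finset.Icc (1 : ℤ) m)).filter
      (fun χψ : (Fin r → ℤ) × (Fin r → ℤ) =>
        ∑ w : Fin n, χψ.1 (c (u, w)) * χψ.2 (c (w, v))
          = ∑ w : Fin n, χψ.1 (c (u', w)) * χψ.2 (c (w, v')))).card
      ≤ 2 * m ^ (2 * r - 1) := by
  set M := univ.val.map fun w : Fin n ↦ (c (u, w), c (w, v))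
  set M' := univ.val.map fun w : Fin n ↦ (c (u', w), c (w, v'))
  set a : Fin r → Fin r → ℤ := fun i j ↦ M.count (i, j) - M'.count (i, j)
  have ha : a ≠ 0 := fun h ↦ hdiff <| Multiset.ext.2 fun ⟨i, j⟩ ↦ by
    exact_mod_cast sub_eq_zero.1 (congrFun₂ h i j)
  have hbilinear : ∀ χ ψ : Fin r → ℤ,
      (∑ w, χ (c (u, w)) * ψ (c (w, v)) = ∑ w, χ (c (u', w)) * ψ (c (w, v')))
        ↔ ∑ i, ∑ j, a i j * (χ i * ψ j) = 0 := fun χ ψ ↦ by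
    rw [sum_mul_eq_sum_count_mul (fun w ↦ (c (u, w), c (w, v))),
      sum_mul_eq_sum_count_mul (fun w ↦ (c (u', w), c (w, v'))), ← sub_eq_zero,
      ← sum_sub_distrib]
    simp only [a, M, M', sub_mul, sum_sub_distrib]
  have hcount := card_filter_bilinear_eq_zero_mul_le ha (Icc (1 : ℤ) m)
  simp only [Int.card_Icc, add_sub_cancel_right, Int.toNat_natCast, Fintype.card_fin] at hcount
  rw [filter_congr fun χψ _ ↦ hbilinear χψ.1 χψ.2]
  refine Nat.le_of_mul_le_mul_right (hcount.trans_eq ?_) hm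
  rw [mul_assoc, ← pow_succ, show 2 * r - 1 + 1 = r + r by omega]

/-- Key probabilistic detection lemma: if the multiset over `w` of color pairs
`(c(u,w), c(w,v))` differs from the multiset of pairs `(c(u',w), c(w,v'))`, then among all
pairs of substitutions `χ, ψ : Fin r → {1,…,m}`, at most `2·m^(2r-1)` of them make the
`(u,v)`- and `(u',v')`-entries of the matrix product `X[χ]·X[ψ]` coincide. -/
theorem probabilistic_detection (n r m : ℕ) (hn : 1 ≤ n) (hr : 1 ≤ r) (hm : 1 ≤ m)
    (c : Fin n × Fin n → Fin r) (u v u' v' : Fin n)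
    (hdiff : (Finset.univ.val.map fun w : Fin n => (c (u, w), c (w, v)))
      ≠ Finset.univ.val.map fun w : Fin n => (c (u', w), c (w, v'))) :
    (((Fintype.piFinset fun _ : Fin r => Finset.Icc (1 : ℤ) m) ×ˢ
        (Fintype.piFinset fun _ : Fin r => Finset.Icc (1 : ℤ) m)).filter
      (fun χψ : (Fin r → ℤ) × (Fin r → ℤ) =>
        ∑ w : Fin n, χψ.1 (c (u, w)) * χψ.2 (c (w, v))
          = ∑ w : Fin n, χψ.1 (c (u', w)) * χψ.2 (c (w, v')))).card
      ≤ 2 * m ^ (2 * r - 1) :=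
  probabilistic_detection_general n r m hr hm c u v u' v' hdiff
end
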